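/- For a square tiled matrix of size p × p with p > 1, the critical path length of the TS-FT algorithm (FlatTree with TS kernels) equals 30p − 34. -/

import Mathlib

/-!
Give every task `t` of TS-FT an explicit potential `f t`, its finish time in the
earliest-start schedule (e.g. `f (TSMQR(i,k,k,j)) = 12i + 18k - 20` for `k ≥ 2`). Along every
edge `t → t'` of the task DAG, `f t' ≥ f t + weight t'`, so `f t` bounds the weight of every
path ending at `t`; on a `p × p` matrix the largest value is `f (GEQRT(p,p)) = 30p - 34`.
It is attained by the path `GEQRT(1,1) → UNMQR(1,1,2) → TSMQR(i,1,1,2)` for `i = 2, …, p`,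
then `TSQRT(p,k,k) → TSMQR(p,k,k,k+1)` for `k = 2, …, p - 1`, and finally `GEQRT(p,p)`,
of weight `10 + 12(p - 1) + 18(p - 2) + 4`.
-/

namespace TiledQR

/-- An elimination `elim(i, piv, k)`: tile `(i, k)` is zeroed out by an orthogonal
transformation combining row `i` with pivot row `piv`. -/
structure Elim where
  i : ℕ
  piv : ℕ
  k : ℕ
deriving DecidableEq

/-- `Before L e f` : the elimination `e` occurs strictly before `f` in the list `L`. -/
def Before (L : List Elim) (e f : Elim) : Prop :=
  ∃ a b : Fin L.length, (a : ℕ) < b ∧ L.get a = e ∧ L.get b = f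

/-- `L` is a valid elimination list for a `p × q` tiled matrix: it contains exactly one
elimination for every sub-diagonal tile `(i, k)` (`1 ≤ k ≤ min p q`, `k < i ≤ p`);
every elimination `elim(i, piv, k)` comes after all eliminations `elim(i, *, k')` and
`elim(piv, *, k')` with `k' < k`, and before the elimination `elim(piv, *, k)` of its
pivot row. -/
def ValidElimList (p q : ℕ) (L : List Elim) : Prop :=
  L.Nodup ∧
  (∀ e ∈ L, 1 ≤ e.k ∧ e.k ≤ min p q ∧ e.k < e.i ∧ e.i ≤ p ∧
      1 ≤ e.piv ∧ e.piv ≤ p ∧ e.piv ≠ e.i) ∧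
  (∀ i k, 1 ≤ k → k ≤ min p q → k < i → i ≤ p → ∃! piv, Elim.mk i piv k ∈ L) ∧
  (∀ a b : Fin L.length, (L.get b).k < (L.get a).k →
      ((L.get b).i = (L.get a).i ∨ (L.get b).i = (L.get a).piv) → (b : ℕ) < a) ∧
  (∀ a b : Fin L.length, (L.get b).k = (L.get a).k →
      (L.get b).i = (L.get a).piv → (a : ℕ) < b)

/-- The tasks of the tiled QR factorization with TT (triangle-on-top-of-triangle)
kernels. -/
inductive Task where
  | GEQRT (r k : ℕ)
  | UNMQR (r k j : ℕ)
  | TTQRT (i piv k : ℕ)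
  | TTMQR (i piv k j : ℕ)
deriving DecidableEq

/-- Weights of the TT kernels, the unit being `n_b ^ 3 / 3` flops. -/
def weight : Task → ℕ
  | .GEQRT _ _ => 4
  | .UNMQR _ _ _ => 6
  | .TTQRT _ _ _ => 2
  | .TTMQR _ _ _ _ => 6

/-- The tasks associated with a `p × q` tiled matrix and an elimination list `L`:
a factorization `GEQRT(r, k)` and updates `UNMQR(r, k, j)` (`k < j ≤ q`) for every tile
`(r, k)` with `k ≤ r ≤ p`, and, for every elimination `elim(i, piv, k)` of `L`, a task
`TTQRT(i, piv, k)` and updates `TTMQR(i, piv, k, j)` for `k < j ≤ q`. -/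
def InTasks (p q : ℕ) (L : List Elim) : Task → Prop
  | .GEQRT r k => 1 ≤ k ∧ k ≤ min p q ∧ k ≤ r ∧ r ≤ p
  | .UNMQR r k j => 1 ≤ k ∧ k ≤ min p q ∧ k ≤ r ∧ r ≤ p ∧ k < j ∧ j ≤ q
  | .TTQRT i piv k => Elim.mk i piv k ∈ L
  | .TTMQR i piv k j => Elim.mk i piv k ∈ L ∧ k < j ∧ j ≤ q

/-- The precedence (dependence) relation between the TT tasks.  Besides the flow
dependencies of the kernels, two tasks reading and writing a common tile
(a pivot tile reused by several eliminations of a column, or a pivot tile that is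
subsequently zeroed out) are serialized in the order of the elimination list. -/
inductive Prec (L : List Elim) : Task → Task → Prop
  | geqrt_unmqr (r k j : ℕ) :
      Prec L (.GEQRT r k) (.UNMQR r k j)
  | geqrt_ttqrt_row (i piv k : ℕ) :
      Prec L (.GEQRT i k) (.TTQRT i piv k)
  | geqrt_ttqrt_piv (i piv k : ℕ) :
      Prec L (.GEQRT piv k) (.TTQRT i piv k)
  | ttqrt_ttmqr (i piv k j : ℕ) :
      Prec L (.TTQRT i piv k) (.TTMQR i piv k j)
  | unmqr_ttmqr_row (i piv k j : ℕ) :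
      Prec L (.UNMQR i k j) (.TTMQR i piv k j)
  | unmqr_ttmqr_piv (i piv k j : ℕ) :
      Prec L (.UNMQR piv k j) (.TTMQR i piv k j)
  | ttmqr_geqrt (a b i k : ℕ) : 2 ≤ k → (a = i ∨ b = i) →
      Prec L (.TTMQR a b (k - 1) k) (.GEQRT i k)
  | ttqrt_serial (i i' piv k : ℕ) :
      Before L (Elim.mk i piv k) (Elim.mk i' piv k) →
      Prec L (.TTQRT i piv k) (.TTQRT i' piv k)
  | ttmqr_serial (i i' piv k j : ℕ) :
      Before L (Elim.mk i piv k) (Elim.mk i' piv k) →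
      Prec L (.TTMQR i piv k j) (.TTMQR i' piv k j)
  | ttqrt_pivot_use (a i piv k : ℕ) :
      Prec L (.TTQRT a i k) (.TTQRT i piv k)
  | ttmqr_pivot_use (a i piv k j : ℕ) :
      Prec L (.TTMQR a i k j) (.TTMQR i piv k j)

/-- A path in the weighted task DAG. -/
def IsPath (p q : ℕ) (L : List Elim) (path : List Task) : Prop :=
  (∀ t ∈ path, InTasks p q L t) ∧ path.Chain' (Prec L)

/-- The critical path length of the tiled algorithm given by the elimination list `L`:
the maximum total weight of a path in the weighted task DAG (equivalently, the makespan
of the earliest-start schedule with unboundedly many processors). -/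
noncomputable def cpLength (p q : ℕ) (L : List Elim) : ℕ :=
  sSup { w : ℕ | ∃ path : List Task, IsPath p q L path ∧ w = (path.map weight).sum }
/-- The tasks of the tiled QR factorization with TS (triangle-on-top-of-square)
kernels. -/
inductive TSTask where
  | GEQRT (r k : ℕ)
  | UNMQR (r k j : ℕ)
  | TSQRT (i piv k : ℕ)
  | TSMQR (i piv k j : ℕ)
deriving DecidableEq

/-- Weights of the TS kernels, the unit being `n_b ^ 3 / 3` flops. -/
def tsWeight : TSTask → ℕ
  | .GEQRT _ _ => 4
  | .UNMQR _ _ _ => 6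
  | .TSQRT _ _ _ => 6
  | .TSMQR _ _ _ _ => 12

/-- Row `r` is the pivot of some elimination of column `k`. -/
def IsPivot (L : List Elim) (r k : ℕ) : Prop := ∃ e ∈ L, e.k = k ∧ e.piv = r

/-- The TS tasks associated with a `p × q` tiled matrix and an elimination list `L`:
only the pivot tiles of each column (and the diagonal tile) are factored into
triangles; every elimination `elim(i, piv, k)` gives a task `TSQRT(i, piv, k)` and
updates `TSMQR(i, piv, k, j)` for `k < j ≤ q`. -/
def TSInTasks (p q : ℕ) (L : List Elim) : TSTask → Prop
  | .GEQRT r k => 1 ≤ k ∧ k ≤ min p q ∧ k ≤ r ∧ r ≤ p ∧ (r = k ∨ IsPivot L r k)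
  | .UNMQR r k j => 1 ≤ k ∧ k ≤ min p q ∧ k ≤ r ∧ r ≤ p ∧ (r = k ∨ IsPivot L r k) ∧
      k < j ∧ j ≤ q
  | .TSQRT i piv k => Elim.mk i piv k ∈ L
  | .TSMQR i piv k j => Elim.mk i piv k ∈ L ∧ k < j ∧ j ≤ q

/-- The precedence (dependence) relation between the TS tasks: flow dependencies of
the kernels; TSQRT (resp. TSMQR) tasks sharing the same pivot row (and column) are
serialized in list order; and every update of a tile from column `k - 1` precedes any
task of column `k` that factors, zeroes out, or uses that tile. -/
inductive TSPrec (L : List Elim) : TSTask → TSTask → Prop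
  | geqrt_unmqr (r k j : ℕ) :
      TSPrec L (.GEQRT r k) (.UNMQR r k j)
  | geqrt_tsqrt (i piv k : ℕ) :
      TSPrec L (.GEQRT piv k) (.TSQRT i piv k)
  | unmqr_tsmqr (i piv k j : ℕ) :
      TSPrec L (.UNMQR piv k j) (.TSMQR i piv k j)
  | tsqrt_tsmqr (i piv k j : ℕ) :
      TSPrec L (.TSQRT i piv k) (.TSMQR i piv k j)
  | tsqrt_serial (i i' piv k : ℕ) :
      Before L (Elim.mk i piv k) (Elim.mk i' piv k) →
      TSPrec L (.TSQRT i piv k) (.TSQRT i' piv k)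
  | tsmqr_serial (i i' piv k j : ℕ) :
      Before L (Elim.mk i piv k) (Elim.mk i' piv k) →
      TSPrec L (.TSMQR i piv k j) (.TSMQR i' piv k j)
  | tsqrt_pivot_use (a i piv k : ℕ) :
      TSPrec L (.TSQRT a i k) (.TSQRT i piv k)
  | tsmqr_pivot_use (a i piv k j : ℕ) :
      TSPrec L (.TSMQR a i k j) (.TSMQR i piv k j)
  | tsmqr_geqrt (a b r k : ℕ) : 2 ≤ k → (a = r ∨ b = r) →
      TSPrec L (.TSMQR a b (k - 1) k) (.GEQRT r k)
  | tsmqr_tsqrt (a b i piv k : ℕ) : 2 ≤ k → (a = i ∨ b = i ∨ a = piv ∨ b = piv) →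
      TSPrec L (.TSMQR a b (k - 1) k) (.TSQRT i piv k)
  | tsmqr_unmqr (a b r k j : ℕ) : 2 ≤ k → (a = r ∨ b = r) →
      TSPrec L (.TSMQR a b (k - 1) j) (.UNMQR r k j)
  | tsmqr_tsmqr (a b i piv k j : ℕ) : 2 ≤ k → (a = i ∨ b = i ∨ a = piv ∨ b = piv) →
      TSPrec L (.TSMQR a b (k - 1) j) (.TSMQR i piv k j)

/-- A path in the weighted TS task DAG. -/
def TSIsPath (p q : ℕ) (L : List Elim) (path : List TSTask) : Prop :=
  (∀ t ∈ path, TSInTasks p q L t) ∧ path.Chain' (TSPrec L)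

/-- The critical path length of a tiled algorithm executed with TS kernels. -/
noncomputable def tsCpLength (p q : ℕ) (L : List Elim) : ℕ :=
  sSup { w : ℕ | ∃ path : List TSTask, TSIsPath p q L path ∧
      w = (path.map tsWeight).sum }
/-- The FlatTree (Sameh-Kuck) elimination list: all eliminations of column `k` use the
diagonal row `k` as pivot; eliminations are listed column by column and, within a
column, by increasing row index. -/
def flatTreeList (p q : ℕ) : List Elim :=
  (List.range' 1 (min p q)).flatMap fun k =>
    (List.range' (k + 1) (p - k)).map fun i => Elim.mk i k k

theorem sum_map_le_of_potential {α β : Type*} [AddCommMonoid β] [PartialOrder β]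
    [IsOrderedAddMonoid β] [CanonicallyOrderedAdd β] {R : α → α → Prop} {S : α → Prop}
    {w f : α → β} {M : β} (hw : ∀ a, S a → w a ≤ f a) (hf : ∀ a, S a → f a ≤ M)
    (hR : ∀ a b, S a → S b → R a b → f a + w b ≤ f b) {l : List α}
    (hS : ∀ a ∈ l, S a) (hl : l.IsChain R) : (l.map w).sum ≤ M := by
  have htail : ∀ (l : List α) (a : α), (∀ b ∈ a :: l, S b) → (a :: l).IsChain R →
      f a + (l.map w).sum ≤ M := by
    intro l
    induction l with
    | nil => intro a hS _; simpa using hf a (hS a (by simp))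
    | cons b l ih =>
      intro a hS hl
      obtain ⟨hab, hl⟩ := List.isChain_cons_cons.1 hl
      have hSb : ∀ c ∈ b :: l, S c := fun c hc => hS c (List.mem_cons_of_mem a hc)
      calc f a + ((b :: l).map w).sum = (f a + w b) + (l.map w).sum := by
            rw [List.map_cons, List.sum_cons, add_assoc]
        _ ≤ f b + (l.map w).sum := by
            gcongr; exact hR a b (hS a (by simp)) (hSb b (by simp)) hab
        _ ≤ M := ih b hSb hl
  cases l with
  | nil => simp
  | cons a l =>
    calc ((a :: l).map w).sum = w a + (l.map w).sum := by simp
      _ ≤ f a + (l.map w).sum := by gcongr; exact hw a (hS a (by simp))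
      _ ≤ M := htail l a hS hl

theorem before_iff_of_pairwise {L : List Elim} {R : Elim → Elim → Prop} (hL : L.Pairwise R)
    (hR : ∀ e f, R e f → ¬R f e) {e f : Elim} :
    Before L e f ↔ e ∈ L ∧ f ∈ L ∧ R e f := by
  constructor
  · rintro ⟨a, b, hab, rfl, rfl⟩
    exact ⟨List.get_mem L a, List.get_mem L b, List.pairwise_iff_get.1 hL a b hab⟩
  · rintro ⟨he, hf, hef⟩
    obtain ⟨a, rfl⟩ := List.mem_iff_get.1 he
    obtain ⟨b, rfl⟩ := List.mem_iff_get.1 hf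
    refine ⟨a, b, ?_, rfl, rfl⟩
    rcases lt_trichotomy (a : ℕ) b with h | h | h
    · exact h
    · cases Fin.ext h
      exact absurd hef (hR _ _ hef)
    · exact absurd (List.pairwise_iff_get.1 hL b a h) (hR _ _ hef)

@[simp]
theorem mem_flatTreeList {p q i piv k : ℕ} :
    Elim.mk i piv k ∈ flatTreeList p q ↔
      piv = k ∧ 1 ≤ k ∧ k ≤ min p q ∧ k < i ∧ i ≤ p := by
  simp only [flatTreeList, List.mem_flatMap, List.mem_map, List.mem_range'_1, Elim.mk.injEq]
  constructor
  · rintro ⟨k, hk, i, hi, rfl, rfl, rfl⟩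
    omega
  · rintro ⟨rfl, h1, h2, h3, h4⟩
    exact ⟨piv, by omega, i, by omega, rfl, rfl, rfl⟩

theorem pairwise_flatTreeList (p q : ℕ) :
    (flatTreeList p q).Pairwise fun e f => toLex (e.k, e.i) < toLex (f.k, f.i) := by
  rw [flatTreeList, List.pairwise_flatMap]
  refine ⟨fun k _ => ?_, (List.pairwise_lt_range').imp fun hk => ?_⟩
  · rw [List.pairwise_map]
    refine (List.pairwise_lt_range').imp fun hi => ?_
    exact Prod.Lex.toLex_lt_toLex.2 (Or.inr ⟨rfl, hi⟩)
  · simp only [List.mem_map]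
    rintro _ ⟨i, -, rfl⟩ _ ⟨i', -, rfl⟩
    exact Prod.Lex.toLex_lt_toLex.2 (Or.inl hk)

@[simp]
theorem before_flatTreeList_iff {p q : ℕ} {e f : Elim} :
    Before (flatTreeList p q) e f ↔
      e ∈ flatTreeList p q ∧ f ∈ flatTreeList p q ∧
        (e.k < f.k ∨ e.k = f.k ∧ e.i < f.i) := by
  rw [before_iff_of_pairwise (pairwise_flatTreeList p q) fun _ _ h => h.asymm,
    Prod.Lex.toLex_lt_toLex]

theorem IsPivot.eq_of_flatTreeList {p q r k : ℕ} (h : IsPivot (flatTreeList p q) r k) :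
    r = k := by
  obtain ⟨⟨i, piv, k'⟩, he, rfl, rfl⟩ := h
  exact (mem_flatTreeList.1 he).1

@[simp]
theorem tsInTasks_flatTreeList_geqrt {p q r k : ℕ} :
    TSInTasks p q (flatTreeList p q) (.GEQRT r k) ↔ r = k ∧ 1 ≤ k ∧ k ≤ min p q := by
  simp only [TSInTasks]
  constructor
  · rintro ⟨h1, h2, -, -, h | h⟩
    exacts [⟨h, h1, h2⟩, ⟨h.eq_of_flatTreeList, h1, h2⟩]
  · rintro ⟨rfl, h1, h2⟩
    exact ⟨h1, h2, le_rfl, by omega, Or.inl rfl⟩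

@[simp]
theorem tsInTasks_flatTreeList_unmqr {p q r k j : ℕ} :
    TSInTasks p q (flatTreeList p q) (.UNMQR r k j) ↔
      r = k ∧ 1 ≤ k ∧ k ≤ min p q ∧ k < j ∧ j ≤ q := by
  simp only [TSInTasks]
  constructor
  · rintro ⟨h1, h2, -, -, h | h, h3, h4⟩
    exacts [⟨h, h1, h2, h3, h4⟩, ⟨h.eq_of_flatTreeList, h1, h2, h3, h4⟩]
  · rintro ⟨rfl, h1, h2, h3, h4⟩
    exact ⟨h1, h2, le_rfl, by omega, Or.inl rfl, h3, h4⟩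

@[simp]
theorem tsInTasks_flatTreeList_tsqrt {p q i piv k : ℕ} :
    TSInTasks p q (flatTreeList p q) (.TSQRT i piv k) ↔
      piv = k ∧ 1 ≤ k ∧ k ≤ min p q ∧ k < i ∧ i ≤ p :=
  mem_flatTreeList

@[simp]
theorem tsInTasks_flatTreeList_tsmqr {p q i piv k j : ℕ} :
    TSInTasks p q (flatTreeList p q) (.TSMQR i piv k j) ↔
      (piv = k ∧ 1 ≤ k ∧ k ≤ min p q ∧ k < i ∧ i ≤ p) ∧ k < j ∧ j ≤ q :=
  and_congr_left' mem_flatTreeList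

def tsftFinishTime : TSTask → ℕ
  | .GEQRT _ k => if k = 1 then 4 else 30 * k - 34
  | .UNMQR _ k _ => if k = 1 then 10 else 30 * k - 28
  | .TSQRT i _ k => if k = 1 then 6 * i - 2 else 12 * i + 18 * k - 32
  | .TSMQR i _ k _ => if k = 1 then 12 * i - 2 else 12 * i + 18 * k - 20

theorem tsftFinishTime_add_tsWeight_le {p q : ℕ} {t t' : TSTask}
    (ht : TSInTasks p q (flatTreeList p q) t) (ht' : TSInTasks p q (flatTreeList p q) t')
    (h : TSPrec (flatTreeList p q) t t') :
    tsftFinishTime t + tsWeight t' ≤ tsftFinishTime t' := by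
  cases h <;> simp only [tsInTasks_flatTreeList_geqrt, tsInTasks_flatTreeList_unmqr,
    tsInTasks_flatTreeList_tsqrt, tsInTasks_flatTreeList_tsmqr, before_flatTreeList_iff] at * <;>
    simp only [tsftFinishTime, tsWeight] <;> split_ifs <;> omega

theorem tsWeight_le_tsftFinishTime {p q : ℕ} {t : TSTask}
    (ht : TSInTasks p q (flatTreeList p q) t) : tsWeight t ≤ tsftFinishTime t := by
  cases t <;> simp only [tsInTasks_flatTreeList_geqrt, tsInTasks_flatTreeList_unmqr,
    tsInTasks_flatTreeList_tsqrt, tsInTasks_flatTreeList_tsmqr] at ht <;>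
    simp only [tsftFinishTime, tsWeight] <;> split_ifs <;> omega

theorem tsftFinishTime_le {p : ℕ} (hp : 1 < p) {t : TSTask}
    (ht : TSInTasks p p (flatTreeList p p) t) : tsftFinishTime t ≤ 30 * p - 34 := by
  cases t <;> simp only [tsInTasks_flatTreeList_geqrt, tsInTasks_flatTreeList_unmqr,
    tsInTasks_flatTreeList_tsqrt, tsInTasks_flatTreeList_tsmqr] at ht <;>
    simp only [tsftFinishTime] <;> split_ifs <;> omega

theorem sum_map_tsWeight_le {p : ℕ} (hp : 1 < p) {path : List TSTask}
    (h : TSIsPath p p (flatTreeList p p) path) : (path.map tsWeight).sum ≤ 30 * p - 34 :=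
  sum_map_le_of_potential (fun _ => tsWeight_le_tsftFinishTime) (fun _ => tsftFinishTime_le hp)
    (fun _ _ => tsftFinishTime_add_tsWeight_le) h.1 h.2

def HasPathTo (p q : ℕ) (L : List Elim) (t : TSTask) (w : ℕ) : Prop :=
  ∃ l : List TSTask, TSIsPath p q L (l ++ [t]) ∧ ((l ++ [t]).map tsWeight).sum = w

theorem hasPathTo_of_tsInTasks {p q : ℕ} {L : List Elim} {t : TSTask}
    (ht : TSInTasks p q L t) : HasPathTo p q L t (tsWeight t) :=
  ⟨[], ⟨by simpa using ht, List.isChain_singleton t⟩, by simp⟩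

theorem HasPathTo.snoc {p q : ℕ} {L : List Elim} {t t' : TSTask} {w : ℕ}
    (h : HasPathTo p q L t w) (htt' : TSPrec L t t') (ht' : TSInTasks p q L t') :
    HasPathTo p q L t' (w + tsWeight t') := by
  obtain ⟨l, ⟨hmem, hchain⟩, rfl⟩ := h
  refine ⟨l ++ [t], ⟨?_, ?_⟩, by simp [add_assoc]⟩
  · intro s hs
    rcases List.mem_append.1 hs with hs | hs
    exacts [hmem s hs, List.mem_singleton.1 hs ▸ ht']
  · exact List.isChain_append.2 ⟨hchain, List.isChain_singleton t', by simpa using htt'⟩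

theorem hasPathTo_tsmqr_column_one {p i : ℕ} (hi : 2 ≤ i) (hip : i ≤ p) :
    HasPathTo p p (flatTreeList p p) (.TSMQR i 1 1 2) (12 * i - 2) := by
  induction i, hi using Nat.le_induction with
  | base =>
    have h : HasPathTo p p (flatTreeList p p) (.GEQRT 1 1) 4 :=
      hasPathTo_of_tsInTasks (tsInTasks_flatTreeList_geqrt.2 (by omega))
    exact (h.snoc (.geqrt_unmqr 1 1 2) (tsInTasks_flatTreeList_unmqr.2 (by omega))).snoc
      (.unmqr_tsmqr 2 1 1 2) (tsInTasks_flatTreeList_tsmqr.2 (by omega))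
  | succ i hi ih =>
    have hbefore : Before (flatTreeList p p) ⟨i, 1, 1⟩ ⟨i + 1, 1, 1⟩ :=
      before_flatTreeList_iff.2 ⟨mem_flatTreeList.2 (by omega), mem_flatTreeList.2 (by omega),
        Or.inr ⟨rfl, i.lt_succ_self⟩⟩
    have h := (ih (by omega)).snoc (.tsmqr_serial i (i + 1) 1 1 2 hbefore)
      (tsInTasks_flatTreeList_tsmqr.2 (by omega))
    convert h using 1
    simp only [tsWeight]
    omega

theorem hasPathTo_tsmqr_last_row {p k : ℕ} (hk : 2 ≤ k) (hkp : k ≤ p) :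
    HasPathTo p p (flatTreeList p p) (.TSMQR p (k - 1) (k - 1) k) (12 * p + 18 * k - 38) := by
  induction k, hk using Nat.le_induction with
  | base =>
    convert hasPathTo_tsmqr_column_one (by omega) le_rfl using 1
    omega
  | succ k hk ih =>
    have h := ((ih (by omega)).snoc (.tsmqr_tsqrt p (k - 1) p k k hk (Or.inl rfl))
      (tsInTasks_flatTreeList_tsqrt.2 (by omega))).snoc (.tsqrt_tsmqr p k k (k + 1))
      (tsInTasks_flatTreeList_tsmqr.2 (by omega))
    rw [Nat.add_sub_cancel]
    convert h using 1
    simp only [tsWeight]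
    omega

theorem hasPathTo_geqrt_last {p : ℕ} (hp : 1 < p) :
    HasPathTo p p (flatTreeList p p) (.GEQRT p p) (30 * p - 34) := by
  have h := (hasPathTo_tsmqr_last_row (by omega) le_rfl).snoc
    (.tsmqr_geqrt p (p - 1) p p (by omega) (Or.inl rfl))
    (tsInTasks_flatTreeList_geqrt.2 (by omega))
  convert h using 1
  simp only [tsWeight]
  omega

/-- **Proposition 2, case `p = q > 1`.** The critical path length of the TS-FT
algorithm (FlatTree with TS kernels) on a square `p × p` matrix with `p > 1` is
`30p - 34`. -/
theorem tsft_cpLength_square (p : ℕ) (hp : 1 < p) :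
    tsCpLength p p (flatTreeList p p) = 30 * p - 34 := by
  refine IsGreatest.csSup_eq ⟨?_, ?_⟩
  · obtain ⟨l, hl, hw⟩ := hasPathTo_geqrt_last hp
    exact ⟨l ++ [.GEQRT p p], hl, hw.symm⟩
  · rintro w ⟨path, hpath, rfl⟩
    exact sum_map_tsWeight_le hp hpath

end TiledQR
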